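/- The function (a,b,c) ↦ |a² + bc|^{−1/2}, defined on the complement of the measure-zero set {a² + bc = 0} in ℝ³, is locally integrable on ℝ³ with respect to Lebesgue measure. (Under the identification of sl(2,ℝ) with ℝ³ via (a,b,c) ↦ [[a,b],[c,−a]], the two roots evaluated at g are ±α(g) with |α(g)| = 2·|a² + bc|^{1/2}, so this asserts that the denominator appearing in the fixed point character formula for SL(2,ℝ) gives a function in L¹_loc(sl(2,ℝ)).) -/

import Mathlib

/-!
For `b ≠ 0` split `|u| ^ r ≤ |b| ^ r + 1_{|u| ≤ |b|} |u| ^ r` (valid for `r ≤ 0`); after the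
substitution `u = t + b c` the second term contributes `|b|⁻¹ ∫_{-|b|}^{|b|} |u| ^ r du`, which is
a constant times `|b| ^ r`. Hence `∫_{-R}^{R} |t + b c| ^ r dc ≤ C_R |b| ^ r` uniformly in `t`,
and `|b| ^ r` is integrable near `0` because `r > -1`; Tonelli bounds the integral over every box.
-/

open MeasureTheory Set
open scoped ENNReal

variable {r : ℝ}

theorem setLIntegral_Ioc_zero_abs_rpow (hr : -1 < r) {s : ℝ} (hs : 0 ≤ s) :
    ∫⁻ u in Ioc 0 s, ENNReal.ofReal (|u| ^ r) = ENNReal.ofReal (s ^ (r + 1) / (r + 1)) := by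
  have hint : IntegrableOn (fun u : ℝ => u ^ r) (Ioc 0 s) := by
    rw [← intervalIntegrable_iff_integrableOn_Ioc_of_le hs]
    exact intervalIntegral.intervalIntegrable_rpow' hr
  have hnonneg : 0 ≤ᵐ[volume.restrict (Ioc 0 s)] fun u : ℝ => u ^ r :=
    ae_restrict_of_forall_mem measurableSet_Ioc fun u hu => Real.rpow_nonneg hu.1.le r
  rw [setLIntegral_congr_fun measurableSet_Ioc fun u hu => by rw [abs_of_pos hu.1],
    ← ofReal_integral_eq_lintegral_ofReal hint hnonneg, ← intervalIntegral.integral_of_le hs,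
    integral_rpow (Or.inl hr), Real.zero_rpow (by linarith), sub_zero]

theorem setLIntegral_Icc_neg_abs_rpow (hr : -1 < r) {s : ℝ} (hs : 0 ≤ s) :
    ∫⁻ u in Icc (-s) s, ENNReal.ofReal (|u| ^ r) =
      ENNReal.ofReal (2 * (s ^ (r + 1) / (r + 1))) := by
  have hneg : ∫⁻ u in Icc (-s) 0, ENNReal.ofReal (|u| ^ r) =
      ∫⁻ u in Icc 0 s, ENNReal.ofReal (|u| ^ r) := by
    simpa using (Measure.measurePreserving_neg volume).setLIntegral_comp_preimage
      (measurableSet_Icc (a := 0) (b := s)) (f := fun u : ℝ => ENNReal.ofReal (|u| ^ r))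
      (by fun_prop)
  have hI : 0 ≤ s ^ (r + 1) / (r + 1) := div_nonneg (Real.rpow_nonneg hs _) (by linarith)
  rw [← Icc_union_Ioc_eq_Icc (neg_nonpos.2 hs) hs,
    lintegral_union measurableSet_Ioc ((Iic_disjoint_Ioc le_rfl).mono_left Icc_subset_Iic_self),
    hneg, setLIntegral_congr Ioc_ae_eq_Icc.symm, setLIntegral_Ioc_zero_abs_rpow hr hs,
    ← ENNReal.ofReal_add hI hI, two_mul]

theorem lintegral_comp_add_mul {b : ℝ} (hb : b ≠ 0) (t : ℝ) {f : ℝ → ℝ≥0∞}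
    (hf : Measurable f) : ∫⁻ c, f (t + b * c) = ENNReal.ofReal |b⁻¹| * ∫⁻ u, f u := by
  have hmap :
      Measure.map (fun c : ℝ => t + b * c) volume = ENNReal.ofReal |b⁻¹| • volume := by
    rw [show (fun c : ℝ => t + b * c) = (t + ·) ∘ (b * ·) from rfl,
      ← Measure.map_map (measurable_const_add t) (measurable_const_mul b),
      Real.map_volume_mul_left hb, Measure.map_smul, map_add_left_eq_self]
  rw [← lintegral_map hf (by fun_prop), hmap, lintegral_smul_measure, smul_eq_mul]

theorem ofReal_abs_rpow_le_add_indicator (hr : r ≤ 0) {b : ℝ} (hb : b ≠ 0) (u : ℝ) :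
    ENNReal.ofReal (|u| ^ r) ≤ ENNReal.ofReal (|b| ^ r) +
      (Icc (-|b|) |b|).indicator (fun u => ENNReal.ofReal (|u| ^ r)) u := by
  by_cases hu : |u| ≤ |b|
  · rw [indicator_of_mem (show u ∈ Icc (-|b|) |b| from abs_le.1 hu)]
    exact le_add_self
  · refine le_add_right (ENNReal.ofReal_le_ofReal ?_)
    exact Real.rpow_le_rpow_of_nonpos (abs_pos.2 hb) (not_le.1 hu).le hr

theorem setLIntegral_abs_add_mul_rpow_le (hr : -1 < r) (hr0 : r ≤ 0) {b : ℝ} (hb : b ≠ 0)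
    (t : ℝ) {R : ℝ} (hR : 0 ≤ R) :
    ∫⁻ c in Icc (-R) R, ENNReal.ofReal (|t + b * c| ^ r) ≤
      ENNReal.ofReal ((2 * R + 2 / (r + 1)) * |b| ^ r) := by
  set F := (Icc (-|b|) |b|).indicator fun u : ℝ => ENNReal.ofReal (|u| ^ r)
  have hF : Measurable F :=
    (by fun_prop : Measurable fun u : ℝ => ENNReal.ofReal (|u| ^ r)).indicator measurableSet_Icc
  have hbr : 0 ≤ |b| ^ r := Real.rpow_nonneg (abs_nonneg b) r
  have hb1 : 0 ≤ 2 * (|b| ^ (r + 1) / (r + 1)) :=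
    mul_nonneg zero_le_two (div_nonneg (Real.rpow_nonneg (abs_nonneg b) _) (by linarith))
  calc ∫⁻ c in Icc (-R) R, ENNReal.ofReal (|t + b * c| ^ r)
      ≤ ∫⁻ c in Icc (-R) R, (ENNReal.ofReal (|b| ^ r) + F (t + b * c)) :=
        lintegral_mono fun c => ofReal_abs_rpow_le_add_indicator hr0 hb _
    _ ≤ ENNReal.ofReal (|b| ^ r) * ENNReal.ofReal (2 * R) + ∫⁻ c, F (t + b * c) := by
        rw [lintegral_add_left measurable_const, setLIntegral_const, Real.volume_Icc,
          sub_neg_eq_add, ← two_mul]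
        gcongr
        exact Measure.restrict_le_self
    _ = ENNReal.ofReal (|b| ^ r) * ENNReal.ofReal (2 * R) +
          ENNReal.ofReal |b⁻¹| * ENNReal.ofReal (2 * (|b| ^ (r + 1) / (r + 1))) := by
        rw [lintegral_comp_add_mul hb t hF, lintegral_indicator measurableSet_Icc,
          setLIntegral_Icc_neg_abs_rpow hr (abs_nonneg b)]
    _ = ENNReal.ofReal ((2 * R + 2 / (r + 1)) * |b| ^ r) := by
        rw [← ENNReal.ofReal_mul hbr, ← ENNReal.ofReal_mul (abs_nonneg _),
          ← ENNReal.ofReal_add (by positivity) (mul_nonneg (abs_nonneg _) hb1)]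
        congr 1
        have hr1 : r + 1 ≠ 0 := by linarith
        rw [Real.rpow_add_one (abs_ne_zero.2 hb), abs_inv]
        field_simp

theorem setLIntegral_Icc_Icc_abs_add_mul_rpow_le (hr : -1 < r) (hr0 : r ≤ 0) (t : ℝ) {R : ℝ}
    (hR : 0 ≤ R) :
    ∫⁻ b in Icc (-R) R, ∫⁻ c in Icc (-R) R, ENNReal.ofReal (|t + b * c| ^ r) ≤
      ENNReal.ofReal (2 * R + 2 / (r + 1)) * ENNReal.ofReal (2 * (R ^ (r + 1) / (r + 1))) := by
  have hb : ∀ᵐ b ∂volume.restrict (Icc (-R) R), b ≠ 0 :=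
    ae_restrict_of_ae (Measure.ae_ne _ 0)
  have hC : 0 ≤ 2 * R + 2 / (r + 1) :=
    add_nonneg (by positivity) (div_nonneg zero_le_two (by linarith))
  calc ∫⁻ b in Icc (-R) R, ∫⁻ c in Icc (-R) R, ENNReal.ofReal (|t + b * c| ^ r)
      ≤ ∫⁻ b in Icc (-R) R,
          ENNReal.ofReal (2 * R + 2 / (r + 1)) * ENNReal.ofReal (|b| ^ r) := by
        refine lintegral_mono_ae (hb.mono fun b hb => ?_)
        rw [← ENNReal.ofReal_mul hC]
        exact setLIntegral_abs_add_mul_rpow_le hr hr0 hb t hR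
    _ = _ := by
        rw [lintegral_const_mul _ (by fun_prop), setLIntegral_Icc_neg_abs_rpow hr hR]

theorem setLIntegral_box_abs_add_mul_rpow_lt_top (g : ℝ → ℝ) (hr : -1 < r) (hr0 : r ≤ 0)
    {R : ℝ} (hR : 0 ≤ R) :
    ∫⁻ p in Icc (-R) R ×ˢ Icc (-R) R ×ˢ Icc (-R) R,
      ENNReal.ofReal (|g p.1 + p.2.1 * p.2.2| ^ r) < ⊤ := by
  set μ := volume.restrict (Icc (-R) R)
  rw [Measure.volume_eq_prod, ← Measure.prod_restrict, Measure.volume_eq_prod,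
    ← Measure.prod_restrict]
  calc _ ≤ ∫⁻ a, ∫⁻ q, ENNReal.ofReal (|g a + q.1 * q.2| ^ r) ∂μ.prod μ ∂μ :=
        lintegral_prod_le _
    _ ≤ ∫⁻ a, ∫⁻ b, ∫⁻ c, ENNReal.ofReal (|g a + b * c| ^ r) ∂μ ∂μ ∂μ := by
        gcongr with a
        exact lintegral_prod_le _
    _ ≤ ∫⁻ a in Icc (-R) R,
          ENNReal.ofReal (2 * R + 2 / (r + 1)) * ENNReal.ofReal (2 * (R ^ (r + 1) / (r + 1))) := by
        gcongr with a
        exact setLIntegral_Icc_Icc_abs_add_mul_rpow_le hr hr0 (g a) hR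
    _ < ⊤ := by
        rw [setLIntegral_const, Real.volume_Icc]
        finiteness

theorem locallyIntegrable_abs_add_mul_rpow {g : ℝ → ℝ} (hg : Measurable g) (hr : -1 < r)
    (hr0 : r ≤ 0) :
    LocallyIntegrable fun p : ℝ × ℝ × ℝ => |g p.1 + p.2.1 * p.2.2| ^ r := by
  refine locallyIntegrable_iff.2 fun K hK => ?_
  obtain ⟨R, hR, hKR⟩ := hK.isBounded.subset_closedBall_lt 0 0
  have hbox :
      Metric.closedBall (0 : ℝ × ℝ × ℝ) R = Icc (-R) R ×ˢ Icc (-R) R ×ˢ Icc (-R) R := by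
    simp only [Prod.zero_eq_mk, ← closedBall_prod_same, Real.closedBall_eq_Icc, zero_sub,
      zero_add]
  refine IntegrableOn.mono_set ⟨Measurable.aestronglyMeasurable (by fun_prop), ?_⟩
    (hKR.trans hbox.le)
  rw [hasFiniteIntegral_iff_ofReal (ae_of_all _ fun p => Real.rpow_nonneg (abs_nonneg _) r)]
  exact setLIntegral_box_abs_add_mul_rpow_lt_top g hr hr0 hR.le

/-- Identifying `sl(2,ℝ)` with `ℝ³` via `(a,b,c) ↦ [[a,b],[c,-a]]`, the function
`(a,b,c) ↦ |a² + bc|^(-1/2)` (extended by `0` on the measure-zero set `{a² + bc = 0}`,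
as `Real.rpow` does) is locally integrable on `ℝ³` with respect to Lebesgue measure:
the denominator in the fixed point character formula for `SL(2,ℝ)` is in `L¹_loc`. -/
theorem locallyIntegrable_inv_sqrt_discriminant :
    MeasureTheory.LocallyIntegrable
      (fun p : ℝ × ℝ × ℝ => |p.1 ^ 2 + p.2.1 * p.2.2| ^ (-(1 : ℝ) / 2))
      MeasureTheory.volume :=
  locallyIntegrable_abs_add_mul_rpow (measurable_id.pow_const 2) (by norm_num) (by norm_num)
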